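/- Let R = K[x,y,z]/(z² − 4xy − 1), let S = R[s, s⁻¹] be the Laurent polynomial ring over R, and let σ be the K-algebra involution of S determined by σ(x) = −x, σ(y) = −y, σ(z) = −z, σ(s) = −s (which is well defined since the relation z² − 4xy − 1 is preserved). Then the subalgebra S^σ of σ-invariants equals the K-subalgebra of S generated by xs, ys, zs, s², and s⁻². -/

import Mathlib

open MvPolynomial

set_option synthInstance.maxHeartbeats 1000000
set_option maxHeartbeats 1000000

/-- The ring `R = K[x,y,z]/(z² − 4xy − 1)`. -/
noncomputable abbrev XYZRing (K : Type*) [Field K] : Type _ :=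
  MvPolynomial (Fin 3) K ⧸
    (Ideal.span {X 2 ^ 2 - 4 * (X 0 * X 1) - 1} : Ideal (MvPolynomial (Fin 3) K))

/-- the class of `x` in `R`, viewed in the Laurent polynomial ring `S = R[s,s⁻¹]` -/
noncomputable abbrev lX (K : Type*) [Field K] : LaurentPolynomial (XYZRing K) :=
  LaurentPolynomial.C (Ideal.Quotient.mk _ (X 0))
/-- the class of `y` in `R`, viewed in `S = R[s,s⁻¹]` -/
noncomputable abbrev lY (K : Type*) [Field K] : LaurentPolynomial (XYZRing K) :=
  LaurentPolynomial.C (Ideal.Quotient.mk _ (X 1))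
/-- the class of `z` in `R`, viewed in `S = R[s,s⁻¹]` -/
noncomputable abbrev lZ (K : Type*) [Field K] : LaurentPolynomial (XYZRing K) :=
  LaurentPolynomial.C (Ideal.Quotient.mk _ (X 2))

/-
Write `f₊ = f + σ f` and `f₋ = f - σ f`. Since `σ` is multiplicative, `2 (f g)₊ = f₊ g₊ + f₋ g₋`
and `2 (f g)₋ = f₊ g₋ + f₋ g₊`. So, when `2` is invertible and `A` contains `s⁻²`, the elements `f`
with `f₊ ∈ A` and `f₋ s ∈ A` form a subalgebra. It contains the anti-invariant generators
`x, y, z, s, s⁻¹` of `S`, because `xs, ys, zs, s², 1 ∈ A`; hence it is all of `S`, and an invariant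
`f` has `2 f = f₊ ∈ A`. Conversely every generator of `A` is a product of two anti-invariants.
-/

section EvenOddSplit

variable {K B : Type*} [CommRing K] [CommRing B] [Algebra K B]

theorem Subalgebra.mem_of_add_self_mem (A : Subalgebra K B) (h2 : IsUnit (2 : K)) {a : B}
    (ha : a + a ∈ A) : a ∈ A := by
  obtain ⟨c, hc⟩ := h2.exists_left_inv
  simpa only [← two_smul K a, smul_smul, hc, one_smul] using A.smul_mem ha c

theorem map_eq_neg_of_mul_eq_one {F : Type*} [FunLike F B B] [RingHomClass F B B] {σ : F}
    {u v : B} (hu : σ u = -u) (huv : u * v = 1) : σ v = -v := by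
  have h : σ v * u = -1 := by
    rw [← neg_neg u, mul_neg, ← hu, ← map_mul, mul_comm, huv, map_one]
  calc σ v = σ v * u * v := by rw [mul_assoc, huv, mul_one]
    _ = -v := by rw [h, neg_one_mul]

theorem map_mul_eq_of_eq_neg {F : Type*} [FunLike F B B] [RingHomClass F B B] {σ : F}
    {a b : B} (ha : σ a = -a) (hb : σ b = -b) : σ (a * b) = a * b := by
  rw [map_mul, ha, hb, neg_mul_neg]

def Subalgebra.evenOddSplit (A : Subalgebra K B) (h2 : IsUnit (2 : K)) (σ : B →ₐ[K] B) {u w : B}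
    (huw : u * u * w = 1) (hw : w ∈ A) : Subalgebra K B where
  carrier := {f | f + σ f ∈ A ∧ (f - σ f) * u ∈ A}
  mul_mem' := by
    rintro f g ⟨hfe, hfo⟩ ⟨hge, hgo⟩
    constructor
    · apply A.mem_of_add_self_mem h2
      have e : f * g + σ (f * g) + (f * g + σ (f * g)) =
          (f + σ f) * (g + σ g) + (f - σ f) * u * ((g - σ g) * u) * w := by
        rw [map_mul]; linear_combination (-(f - σ f) * (g - σ g)) * huw
      rw [e]
      exact A.add_mem (A.mul_mem hfe hge) (A.mul_mem (A.mul_mem hfo hgo) hw)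
    · apply A.mem_of_add_self_mem h2
      have e : (f * g - σ (f * g)) * u + (f * g - σ (f * g)) * u =
          (f + σ f) * ((g - σ g) * u) + (f - σ f) * u * (g + σ g) := by
        rw [map_mul]; ring
      rw [e]
      exact A.add_mem (A.mul_mem hfe hgo) (A.mul_mem hfo hge)
  add_mem' := by
    rintro f g ⟨hfe, hfo⟩ ⟨hge, hgo⟩
    constructor
    · rw [map_add, add_add_add_comm]
      exact A.add_mem hfe hge
    · rw [map_add, add_sub_add_comm, add_mul]
      exact A.add_mem hfo hgo
  algebraMap_mem' c := by
    constructor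
    · rw [AlgHom.commutes]
      exact A.add_mem (A.algebraMap_mem c) (A.algebraMap_mem c)
    · rw [AlgHom.commutes, sub_self, zero_mul]
      exact A.zero_mem

theorem Subalgebra.mem_of_map_eq_self_of_adjoin_eq_top (A : Subalgebra K B)
    (h2 : IsUnit (2 : K)) {σ : B →ₐ[K] B} {G : Set B} (hG : Algebra.adjoin K G = ⊤)
    (hσG : ∀ g ∈ G, σ g = -g) {u w : B} (hGu : ∀ g ∈ G, g * u ∈ A) (huw : u * u * w = 1)
    (hw : w ∈ A) {f : B} (hf : σ f = f) : f ∈ A := by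
  have hG_le : Algebra.adjoin K G ≤ A.evenOddSplit h2 σ huw hw := by
    refine Algebra.adjoin_le fun g hg ↦ ⟨?_, ?_⟩
    · rw [hσG g hg, add_neg_cancel]
      exact A.zero_mem
    · rw [hσG g hg, sub_neg_eq_add, add_mul]
      exact A.add_mem (hGu g hg) (hGu g hg)
  have hfe := (hG_le (hG ▸ Algebra.mem_top : f ∈ Algebra.adjoin K G)).1
  rw [hf] at hfe
  exact A.mem_of_add_self_mem h2 hfe

end EvenOddSplit

theorem Ideal.Quotient.adjoin_range_mk_X_eq_top {ι K : Type*} [CommRing K]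
    (I : Ideal (MvPolynomial ι K)) :
    Algebra.adjoin K (Set.range (Ideal.Quotient.mk I ∘ X)) = ⊤ := by
  rw [Set.range_comp, ← Ideal.Quotient.mkₐ_eq_mk K, Algebra.adjoin_image, adjoin_range_X,
    Algebra.map_top, AlgHom.range_eq_top]
  exact Ideal.Quotient.mkₐ_surjective K I

namespace LaurentPolynomial

theorem adjoin_C_image_union_eq_top {K R : Type*} [CommSemiring K] [CommSemiring R]
    [Algebra K R] {s : Set R} (hs : Algebra.adjoin K s = ⊤) :
    Algebra.adjoin K (C '' s ∪ {T 1, T (-1)}) = (⊤ : Subalgebra K R[T;T⁻¹]) := by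
  set S := Algebra.adjoin K (C '' s ∪ {T 1, T (-1)})
  have hC (r : R) : C r ∈ S := by
    have hr : r ∈ Algebra.adjoin K s := hs ▸ Algebra.mem_top
    have hle : (Algebra.adjoin K s).map (IsScalarTower.toAlgHom K R R[T;T⁻¹]) ≤ S := by
      rw [← Algebra.adjoin_image]
      exact Algebra.adjoin_mono (Set.image_subset_iff.2 fun x hx ↦ Or.inl ⟨x, hx, rfl⟩)
    exact hle ⟨r, hr, rfl⟩
  have hT (n : ℤ) : T n ∈ S := by
    induction n using Int.induction_on with
    | zero => exact T_zero (R := R) ▸ S.one_mem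
    | succ n ih =>
      rw [T_add]
      exact S.mul_mem ih (Algebra.subset_adjoin (by simp))
    | pred n ih =>
      rw [sub_eq_add_neg, T_add]
      exact S.mul_mem ih (Algebra.subset_adjoin (by simp))
  refine eq_top_iff.2 fun f _ ↦ f.induction_on' (fun _ _ ↦ S.add_mem) fun n a ↦ ?_
  exact S.mul_mem (hC a) (hT n)

end LaurentPolynomial

open LaurentPolynomial in
theorem stmt_15_general {K : Type*} [Field K] [CharZero K]
    (σ : LaurentPolynomial (XYZRing K) →ₐ[K] LaurentPolynomial (XYZRing K))
    (hσx : σ (lX K) = -lX K) (hσy : σ (lY K) = -lY K) (hσz : σ (lZ K) = -lZ K)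
    (hσs : σ (LaurentPolynomial.T 1) = -LaurentPolynomial.T 1) :
    {f : LaurentPolynomial (XYZRing K) | σ f = f} =
      (Algebra.adjoin K
        ({lX K * LaurentPolynomial.T 1, lY K * LaurentPolynomial.T 1,
          lZ K * LaurentPolynomial.T 1, LaurentPolynomial.T 2, LaurentPolynomial.T (-2)} :
          Set (LaurentPolynomial (XYZRing K))) : Set (LaurentPolynomial (XYZRing K))) := by
  set A := Algebra.adjoin K ({lX K * T 1, lY K * T 1, lZ K * T 1, T 2, T (-2)} :
    Set (XYZRing K)[T;T⁻¹])
  set G : Set (XYZRing K)[T;T⁻¹] :=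
    C '' Set.range (Ideal.Quotient.mk _ ∘ X) ∪ {T 1, T (-1)}
  have hσs' : σ (T (-1)) = -T (-1) :=
    map_eq_neg_of_mul_eq_one (σ := σ) hσs (by rw [← T_add, add_neg_cancel, T_zero])
  have hσG : ∀ g ∈ G, σ g = -g := by
    rintro _ (⟨_, ⟨i, rfl⟩, rfl⟩ | hg)
    · fin_cases i <;> assumption
    · rcases hg with rfl | rfl <;> assumption
  have hGA : ∀ g ∈ G, g * T 1 ∈ A := by
    rintro _ (⟨_, ⟨i, rfl⟩, rfl⟩ | hg)
    · fin_cases i <;> exact Algebra.subset_adjoin (by simp)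
    · rcases hg with rfl | rfl
      · rw [← T_add]; exact Algebra.subset_adjoin (by simp)
      · rw [← T_add, neg_add_cancel, T_zero]; exact A.one_mem
  have hA : A ≤ AlgHom.equalizer σ (AlgHom.id K _) := by
    refine Algebra.adjoin_le ?_
    rintro _ (rfl | rfl | rfl | rfl | rfl) <;>
      simp only [SetLike.mem_coe, AlgHom.mem_equalizer, AlgHom.id_apply]
    · exact map_mul_eq_of_eq_neg (σ := σ) hσx hσs
    · exact map_mul_eq_of_eq_neg (σ := σ) hσy hσs
    · exact map_mul_eq_of_eq_neg (σ := σ) hσz hσs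
    · rw [show (2 : ℤ) = 1 + 1 by norm_num, T_add]
      exact map_mul_eq_of_eq_neg (σ := σ) hσs hσs
    · rw [show (-2 : ℤ) = -1 + -1 by norm_num, T_add]
      exact map_mul_eq_of_eq_neg (σ := σ) hσs' hσs'
  have hTT : T 1 * T 1 * T (-2) = (1 : (XYZRing K)[T;T⁻¹]) := by
    rw [← T_add, ← T_add]
    norm_num
  ext f
  refine ⟨fun hf ↦ ?_, fun hf ↦ hA hf⟩
  have h2 : IsUnit (2 : K) := isUnit_iff_ne_zero.2 two_ne_zero
  have hG : Algebra.adjoin K G = ⊤ :=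
    adjoin_C_image_union_eq_top (Ideal.Quotient.adjoin_range_mk_X_eq_top _)
  exact A.mem_of_map_eq_self_of_adjoin_eq_top (B := (XYZRing K)[T;T⁻¹]) h2 hG hσG hGA hTT
    (Algebra.subset_adjoin (by simp)) hf

/-- Let `R = K[x,y,z]/(z² − 4xy − 1)`, `S = R[s,s⁻¹]` and let `σ` be the
`K`-algebra involution of `S` with `σ(x) = −x`, `σ(y) = −y`, `σ(z) = −z`, `σ(s) = −s`.  Then
the invariants `S^σ` form the `K`-subalgebra generated by `xs`, `ys`, `zs`, `s²` and `s⁻²`. -/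
theorem stmt_15 {K : Type*} [Field K] [CharZero K]
    (σ : LaurentPolynomial (XYZRing K) →ₐ[K] LaurentPolynomial (XYZRing K))
    (hσσ : ∀ f, σ (σ f) = f)
    (hσx : σ (lX K) = -lX K) (hσy : σ (lY K) = -lY K) (hσz : σ (lZ K) = -lZ K)
    (hσs : σ (LaurentPolynomial.T 1) = -LaurentPolynomial.T 1) :
    {f : LaurentPolynomial (XYZRing K) | σ f = f} =
      (Algebra.adjoin K
        ({lX K * LaurentPolynomial.T 1, lY K * LaurentPolynomial.T 1,
          lZ K * LaurentPolynomial.T 1, LaurentPolynomial.T 2, LaurentPolynomial.T (-2)} :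
          Set (LaurentPolynomial (XYZRing K))) : Set (LaurentPolynomial (XYZRing K))) :=
  stmt_15_general σ hσx hσy hσz hσs
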